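/- The λ-volume of E_{T,c} equals (2^{#S_ℝ} · π^{#S_ℂ} · ϖ^k)^d · c · T for all T, c > 0. In particular r·|E_{T,c}| = T·|E_{r,c}| for all r, T, c > 0. -/

import Mathlib

/- Common setup: the Minkowski space `K_S` of a number field `K`, the homogeneous space
`X = SL_d(K_S)/SL_d(𝒪)`, weighted quasi-norms, the sets `E_{T,c}`, Siegel transforms,
the diagonal flow `g_t`, the unipotents `u(ϑ)`, the function `α` and the class `C_α(X)`. -/

open MeasureTheory NumberField Matrix Filter Topology Set
open scoped ENNReal Classical

noncomputable section

namespace Paper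

variable (K : Type) [Field K] [NumberField K]

/-- The Minkowski space `K_S ≅ ℝ^{r₁} × ℂ^{r₂}` of the number field `K`. -/
abbrev KS : Type :=
  ({w : InfinitePlace K // w.IsReal} → ℝ) × ({w : InfinitePlace K // w.IsComplex} → ℂ)

/-- The absolute value of the component of `z ∈ K_S` at the archimedean place `w`. -/
def placeAbs (z : KS K) (w : InfinitePlace K) : ℝ :=
  if h : w.IsReal then |z.1 ⟨w, h⟩|
  else ‖z.2 ⟨w, NumberField.InfinitePlace.not_isReal_iff_isComplex.mp h⟩‖

variable {K}

/-- The weighted quasi-norm `‖x‖_a = max_{i,w} |x_{i,w}|^{1/a_{i,w}}` on `K_S^m`. -/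
def wnorm {m : ℕ} (a : Fin m → InfinitePlace K → ℝ) (x : Fin m → KS K) : ℝ :=
  ⨆ i, ⨆ w, placeAbs K (x i) w ^ (1 / a i w)

/-- `a` is a weight vector: positive entries, and
`∑_{w real} ∑ᵢ a_{i,w} + 2 ∑_{w complex} ∑ᵢ a_{i,w} = 1`. -/
def IsWeight {m : ℕ} (a : Fin m → InfinitePlace K → ℝ) : Prop :=
  (∀ i w, 0 < a i w) ∧
    ((∑ w : {w : InfinitePlace K // w.IsReal}, ∑ i, a i w.1) +
      2 * ∑ w : {w : InfinitePlace K // w.IsComplex}, ∑ i, a i w.1) = 1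

/-- The standard Euclidean inner product on `K_S ≅ ℝ^k`. -/
def ksInner (z z' : KS K) : ℝ :=
  ∑ w, z.1 w * z'.1 w + ∑ w, (z.2 w * (starRingEnd ℂ) (z'.2 w)).re

/-- The standard Euclidean inner product on `K_S^ι ≅ ℝ^{|ι| k}`. -/
def vinner {ι : Type} [Fintype ι] (v v' : ι → KS K) : ℝ := ∑ i, ksInner (v i) (v' i)

/-- The Euclidean norm on `K_S^ι ≅ ℝ^{|ι| k}`. -/
def enorm2 {ι : Type} [Fintype ι] (v : ι → KS K) : ℝ := Real.sqrt (vinner v v)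

section mn
variable {m n : ℕ}

/-- The first `m` coordinates (the `x`-part) of a vector in `K_S^{m+n}`. -/
def xpart (z : (Fin m ⊕ Fin n) → KS K) : Fin m → KS K := fun i => z (Sum.inl i)

/-- The last `n` coordinates (the `y`-part) of a vector in `K_S^{m+n}`. -/
def ypart (z : (Fin m ⊕ Fin n) → KS K) : Fin n → KS K := fun j => z (Sum.inr j)

/-- The set `E_{T,c} = {(x,y) ∈ K_S^m × K_S^n : ‖x‖_a ‖y‖_b < c, 1 ≤ ‖y‖_b < e^T}`. -/
def Eset (a : Fin m → InfinitePlace K → ℝ) (b : Fin n → InfinitePlace K → ℝ) (c T : ℝ) :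
    Set ((Fin m ⊕ Fin n) → KS K) :=
  {z | wnorm a (xpart z) * wnorm b (ypart z) < c ∧
    1 ≤ wnorm b (ypart z) ∧ wnorm b (ypart z) < Real.exp T}

/-- The set `F_{r,c} = {(x,y) ∈ K_S^m × K_S^n : ‖x‖_a ‖y‖_b < c, 1 ≤ ‖x‖_a < e^r}`. -/
def Fset (a : Fin m → InfinitePlace K → ℝ) (b : Fin n → InfinitePlace K → ℝ) (c r : ℝ) :
    Set ((Fin m ⊕ Fin n) → KS K) :=
  {z | wnorm a (xpart z) * wnorm b (ypart z) < c ∧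
    1 ≤ wnorm a (xpart z) ∧ wnorm a (xpart z) < Real.exp r}

/-- The `a`-weighted flow `F_{at}` on `K_S^m`. -/
def flow (a : Fin m → InfinitePlace K → ℝ) (t : ℝ) (x : Fin m → KS K) : Fin m → KS K :=
  fun i => (fun w => Real.exp (a i w.1 * t) * (x i).1 w,
            fun w => (Real.exp (a i w.1 * t) : ℂ) * (x i).2 w)

end mn

/-- The unit sphere `𝕊 = {x ∈ K_S^ι : ∑_{i,v} |x_{i,v}|² = 1}`. -/
def usphere {ι : Type} [Fintype ι] : Set (ι → KS K) := {x | vinner x x = 1}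

/-- `π_a(x) ∈ A`: some (equivalently, the unique) point of the `F_{at}`-orbit of `x`
on the unit sphere lies in `A`. -/
def projIn {m : ℕ} (a : Fin m → InfinitePlace K → ℝ) (A : Set (Fin m → KS K))
    (x : Fin m → KS K) : Prop :=
  ∃ t : ℝ, flow a t x ∈ usphere ∧ flow a t x ∈ A

/-- The set `E_{T,c}(A,B)`. -/
def EsetAB {m n : ℕ} (a : Fin m → InfinitePlace K → ℝ) (b : Fin n → InfinitePlace K → ℝ)
    (c T : ℝ) (A : Set (Fin m → KS K)) (B : Set (Fin n → KS K)) :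
    Set ((Fin m ⊕ Fin n) → KS K) :=
  {z | z ∈ Eset a b c T ∧ projIn a A (xpart z) ∧ projIn b B (ypart z)}

/-- The cone (minus the origin) on a subset `A` of the unit sphere. -/
def cone {ι : Type} [Fintype ι] (A : Set (ι → KS K)) : Set (ι → KS K) :=
  {x | ∃ r : ℝ, 0 < r ∧ r ≤ 1 ∧ ∃ y ∈ A, x = r • y}

/-- The standard probability measure of a subset `A` of the unit sphere, defined as the
normalized Lebesgue measure of the cone on `A`. -/
def sphVol {ι : Type} [Fintype ι] (A : Set (ι → KS K)) : ℝ≥0∞ :=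
  volume (cone A) / volume (cone (usphere (K := K) (ι := ι)))

/-- The topological frontier of a subset `A` of the unit sphere, relative to the sphere. -/
def relFrontier {ι : Type} [Fintype ι] (A : Set (ι → KS K)) : Set (ι → KS K) :=
  closure A ∩ closure ((usphere (K := K) (ι := ι)) \ A)

variable (K)

/-- The Haar measure `λ` on `K_S`: the multiple `ϖ` of Lebesgue measure in each of the
`k` real coordinates of `K_S ≅ ℝ^k`. -/
def lam (ϖ : ℝ) : Measure (KS K) :=
  (ENNReal.ofReal ϖ) ^ (Module.finrank ℚ K) • (volume : Measure (KS K))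

/-- The Haar measure `λ` on `K_S^ι`: the product of copies of `lam K ϖ`. -/
def lamd (ι : Type) [Fintype ι] (ϖ : ℝ) : Measure (ι → KS K) :=
  (ENNReal.ofReal ϖ) ^ (Module.finrank ℚ K * Fintype.card ι) • (volume : Measure (ι → KS K))

/-- The embedding `ι_S : 𝒪 → K_S` of the ring of integers into the Minkowski space. -/
def intHom : 𝓞 K →+* KS K := (mixedEmbedding K).comp (algebraMap (𝓞 K) K)

/-- The image `ι_S(𝒪)` of `𝒪` in `K_S`, as an additive subgroup. -/
def intLattice : AddSubgroup (KS K) := (intHom K).toAddMonoidHom.range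

/-- `𝒪` has covolume one in `K_S` with respect to the measure `lam K ϖ`. -/
def covolOne (ϖ : ℝ) : Prop :=
  ∃ F : Set (KS K), IsAddFundamentalDomain (intLattice K) F (lam K ϖ) ∧ lam K ϖ F = 1

/-- `G = SL_d(K_S)`, with rows/columns indexed by `ι`. -/
abbrev SLd (ι : Type) [Fintype ι] [DecidableEq ι] : Type :=
  Matrix.SpecialLinearGroup ι (KS K)

variable (ι : Type) [Fintype ι] [DecidableEq ι]

instance : TopologicalSpace (SLd K ι) :=
  TopologicalSpace.induced (fun g => (g : Matrix ι ι (KS K))) inferInstance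

instance : MeasurableSpace (Matrix ι ι (KS K)) :=
  MeasurableSpace.pi (m := fun _ : ι => inferInstance)

instance : MeasurableSpace (SLd K ι) :=
  MeasurableSpace.comap (fun g => (g : Matrix ι ι (KS K))) inferInstance

/-- `Γ = SL_d(ι_S(𝒪))`, the image of `SL_d(𝒪)` in `G`. -/
def Gamma : Subgroup (SLd K ι) :=
  (Matrix.SpecialLinearGroup.map (n := ι) (intHom K)).range

/-- The homogeneous space `X = G/Γ`. -/
abbrev XS : Type := SLd K ι ⧸ Gamma K ι

/-- The standard lattice `ι_S(𝒪)^d ⊆ K_S^d`. -/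
def stdLat : Set (ι → KS K) := {v | ∃ w : ι → 𝓞 K, v = fun i => intHom K (w i)}

/-- The unimodular lattice in `K_S^d` corresponding to a point of `X = G/Γ`:
the orbit `g · ι_S(𝒪)^d` of the standard lattice under any representative `g` of `x`. -/
def latticeOf (x : XS K ι) : Set (ι → KS K) :=
  {v | ∃ g : SLd K ι, QuotientGroup.mk g = x ∧
    ∃ w ∈ stdLat K ι, v = Matrix.mulVec (g : Matrix ι ι (KS K)) w}

/-- The Siegel transform `f̂(Λ) = ∑_{v ∈ Λ ∖ {0}} f(v)`. -/
def siegel (f : (ι → KS K) → ℝ) (x : XS K ι) : ℝ :=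
  ∑' v : ↥(latticeOf K ι x \ {0}), f ↑v

/-- The open Euclidean ball of radius `r` about the origin in `K_S^ι ≅ ℝ^{|ι| k}`. -/
def Bset (r : ℝ) : Set (ι → KS K) := {v | enorm2 v < r}

/-- The open annulus `{v ∈ K_S^ι : s < ‖v‖₂ < r}`. -/
def annulus (s r : ℝ) : Set (ι → KS K) := {v | s < enorm2 v ∧ enorm2 v < r}

variable {K ι}

/-- The function `α(Λ) = sup { d(Λ')⁻¹ : Λ' a subgroup of Λ }`: the supremum is over the
subgroups generated by linearly independent tuples of lattice vectors, whose covolume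
`d(Λ')` in their real span is the square root of the Gram determinant. -/
def alpha (x : XS K ι) : ℝ :=
  ⨆ (j : ℕ) (v : Fin j → (ι → KS K)) (_ : ∀ i, v i ∈ latticeOf K ι x)
    (_ : LinearIndependent ℝ v),
    (Real.sqrt (Matrix.det (Matrix.of fun i i' => vinner (v i) (v i'))))⁻¹

/-- The class `C_α(X)`: functions continuous off a `μ`-null set whose growth is
majorized by `α`. -/
def Calpha (μ : Measure (XS K ι)) : Set ((XS K ι) → ℝ) :=
  {φ | (∃ N : Set (XS K ι), μ N = 0 ∧ ∀ x ∉ N, ContinuousAt φ x) ∧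
    ∃ C : ℝ, 0 < C ∧ ∀ x, |φ x| ≤ C * alpha x}

/-- Birkhoff genericity of `x ∈ X` for the flow `g` with respect to `φ`:
`(1/T) ∫₀ᵀ φ(g_t x) dt → ∫_X φ dμ` as `T → ∞`. -/
def IsGeneric (μ : Measure (XS K ι)) (g : ℝ → SLd K ι) (φ : XS K ι → ℝ) (x : XS K ι) : Prop :=
  Tendsto (fun T : ℝ => (1 / T) * ∫ t in (0:ℝ)..T, φ (g t • x)) atTop (𝓝 (∫ y, φ y ∂μ))

variable {m n : ℕ}

/-- The diagonal one-parameter subgroup `g_t`, as a matrix. -/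
def gtMat (a : Fin m → InfinitePlace K → ℝ) (b : Fin n → InfinitePlace K → ℝ) (t : ℝ) :
    Matrix (Fin m ⊕ Fin n) (Fin m ⊕ Fin n) (KS K) :=
  Matrix.diagonal (Sum.elim
    (fun i => ((fun w => Real.exp (a i w.1 * t)), (fun w => (Real.exp (a i w.1 * t) : ℂ))))
    (fun j => ((fun w => Real.exp (-(b j w.1) * t)), (fun w => (Real.exp (-(b j w.1) * t) : ℂ)))))

/-- `g_t` as an element of `SL_d(K_S)`, given that its determinant is one
(which is the assertion `g_t ∈ G` of the paper). -/
def gtSL (a : Fin m → InfinitePlace K → ℝ) (b : Fin n → InfinitePlace K → ℝ)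
    (hdet : ∀ t : ℝ, (gtMat a b t).det = 1) (t : ℝ) : SLd K (Fin m ⊕ Fin n) :=
  ⟨gtMat a b t, hdet t⟩

/-- `u(ϑ) = [[1_m, ϑ], [0, 1_n]]`, as an element of `SL_d(K_S)`. -/
def uSL (ϑ : Fin m → Fin n → KS K) : SLd K (Fin m ⊕ Fin n) :=
  ⟨Matrix.fromBlocks 1 (Matrix.of ϑ) 0 1, by
    rw [Matrix.det_fromBlocks_zero₂₁]; simp⟩

variable (K m n)

/-- The underlying matrix of an element of `SL_{m+n}(K_S)`. -/
abbrev mat (g : SLd K (Fin m ⊕ Fin n)) : Matrix (Fin m ⊕ Fin n) (Fin m ⊕ Fin n) (KS K) := g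

/-- The set `ℳ` of elements of `G` whose upper-left `m × m` block is invertible. -/
def Mset : Set (SLd K (Fin m ⊕ Fin n)) :=
  {g | IsUnit ((mat K m n g).toBlocks₁₁).det}

/-- The subgroup `ℋ` of block lower-triangular elements of `G`. -/
def Hsub : Subgroup (SLd K (Fin m ⊕ Fin n)) where
  carrier := {g | (mat K m n g).toBlocks₁₂ = 0}
  one_mem' := by
    show (mat K m n 1).toBlocks₁₂ = 0
    rw [show mat K m n 1 = (1 : Matrix (Fin m ⊕ Fin n) (Fin m ⊕ Fin n) (KS K)) from rfl,
      ← Matrix.fromBlocks_one, Matrix.toBlocks_fromBlocks₁₂]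
  mul_mem' := by
    intro a b ha hb
    have ha' : (mat K m n a).toBlocks₁₂ = 0 := ha
    have hb' : (mat K m n b).toBlocks₁₂ = 0 := hb
    have ha2 : Matrix.fromBlocks (mat K m n a).toBlocks₁₁ 0
        (mat K m n a).toBlocks₂₁ (mat K m n a).toBlocks₂₂ = mat K m n a := by
      rw [← ha']; exact Matrix.fromBlocks_toBlocks _
    have hb2 : Matrix.fromBlocks (mat K m n b).toBlocks₁₁ 0
        (mat K m n b).toBlocks₂₁ (mat K m n b).toBlocks₂₂ = mat K m n b := by
      rw [← hb']; exact Matrix.fromBlocks_toBlocks _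
    show (mat K m n (a * b)).toBlocks₁₂ = 0
    have : mat K m n (a * b) = mat K m n a * mat K m n b := rfl
    rw [this, ← ha2, ← hb2, Matrix.fromBlocks_multiply]
    simp
  inv_mem' := by
    intro g hg
    have hg' : (mat K m n g).toBlocks₁₂ = 0 := hg
    have hg2 : Matrix.fromBlocks (mat K m n g).toBlocks₁₁ 0
        (mat K m n g).toBlocks₂₁ (mat K m n g).toBlocks₂₂ = mat K m n g := by
      rw [← hg']; exact Matrix.fromBlocks_toBlocks _
    set A := (mat K m n g).toBlocks₁₁ with hA
    have hdet : IsUnit A.det := by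
      have h1 : (mat K m n g).det = 1 := g.prop
      rw [← hg2, Matrix.det_fromBlocks_zero₁₂] at h1
      exact isUnit_iff_exists_inv.mpr ⟨_, h1⟩
    have hmul : mat K m n g * mat K m n g⁻¹ = 1 := by
      have : mat K m n (g * g⁻¹) = mat K m n g * mat K m n g⁻¹ := rfl
      rw [← this, mul_inv_cancel]
      rfl
    have hBlock : A * (mat K m n g⁻¹).toBlocks₁₂ = 0 := by
      have h2 := congrArg Matrix.toBlocks₁₂ hmul
      rw [← hg2, ← Matrix.fromBlocks_toBlocks (mat K m n g⁻¹),
        Matrix.fromBlocks_multiply] at h2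
      rw [← Matrix.fromBlocks_one, Matrix.toBlocks_fromBlocks₁₂] at h2
      have h1' : (1 : Matrix (Fin m ⊕ Fin n) (Fin m ⊕ Fin n) (KS K)).toBlocks₁₂ = 0 := by
        first
          | (rw [← Matrix.fromBlocks_one, Matrix.toBlocks_fromBlocks₁₂])
          | (ext i j; simp [Matrix.toBlocks₁₂, Matrix.one_apply])
      simpa [h1'] using h2
    show (mat K m n g⁻¹).toBlocks₁₂ = 0
    calc (mat K m n g⁻¹).toBlocks₁₂
        = A⁻¹ * (A * (mat K m n g⁻¹).toBlocks₁₂) := by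
          rw [Matrix.nonsing_inv_mul_cancel_left _ _ hdet]
      _ = 0 := by rw [hBlock, Matrix.mul_zero]


/-! The sublevel set `{‖x‖_a < R}` is a product over `i` of polydiscs with radii `R ^ a i w`, so
by the weight condition its volume is `(2 ^ r₁ π ^ r₂) ^ m R`. Hence `‖·‖_b` pushes Lebesgue
measure forward to `(2 ^ r₁ π ^ r₂) ^ n` times Lebesgue measure on `(0, ∞)`, and integrating the
volume `(2 ^ r₁ π ^ r₂) ^ m c / s` of the `x`-slices over `1 ≤ s < e ^ T` gives
`|E_{T,c}| = (2 ^ r₁ π ^ r₂) ^ (m + n) c T`. -/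

section WeightedNorm

open NumberField.InfinitePlace NumberField.mixedEmbedding NNReal

variable {K : Type} [Field K] {m : ℕ}

theorem iSup_lt_iff_of_finite {ι : Type*} [Finite ι] {f : ι → ℝ} {R : ℝ} (hR : 0 < R) :
    ⨆ i, f i < R ↔ ∀ i, f i < R := by
  rcases isEmpty_or_nonempty ι with hι | hι
  · simp [Real.iSup_of_isEmpty, hR]
  · refine ⟨fun h i => (le_ciSup (Finite.bddAbove_range f) i).trans_lt h, fun h => ?_⟩
    obtain ⟨i, hi⟩ := exists_eq_ciSup_of_finite (f := f)
    exact hi ▸ h i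

theorem placeAbs_nonneg (z : KS K) (w : InfinitePlace K) : 0 ≤ placeAbs K z w := by
  unfold placeAbs
  split <;> positivity

theorem measurable_placeAbs (w : InfinitePlace K) :
    Measurable fun z : KS K => placeAbs K z w := by
  unfold placeAbs
  split <;> fun_prop

theorem wnorm_nonneg [NumberField K] (a : Fin m → InfinitePlace K → ℝ) (x : Fin m → KS K) :
    0 ≤ wnorm a x :=
  Real.iSup_nonneg fun _ => Real.iSup_nonneg fun _ => Real.rpow_nonneg (placeAbs_nonneg _ _) _

theorem measurable_wnorm [NumberField K] (a : Fin m → InfinitePlace K → ℝ) :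
    Measurable (wnorm (K := K) a) :=
  Measurable.iSup fun i => Measurable.iSup fun w =>
    ((measurable_placeAbs w).comp (measurable_pi_apply i)).pow_const _

theorem setOf_forall_placeAbs_lt (f : InfinitePlace K → ℝ≥0) :
    {z : KS K | ∀ w, placeAbs K z w < f w} = convexBodyLT K f := by
  ext z
  simp only [mem_ofPred_eq, mem_prod, Set.mem_pi, mem_univ, forall_const, mem_ball_zero_iff,
    Real.norm_eq_abs]
  constructor
  · intro h
    exact ⟨fun w => by simpa [placeAbs, w.2] using h w.1,
      fun w => by simpa [placeAbs, not_isReal_iff_isComplex.mpr w.2] using h w.1⟩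
  · intro h w
    by_cases hw : w.IsReal
    · simpa [placeAbs, hw] using h.1 ⟨w, hw⟩
    · simpa [placeAbs, hw] using h.2 ⟨w, not_isReal_iff_isComplex.mp hw⟩

theorem setOf_wnorm_lt [NumberField K] {a : Fin m → InfinitePlace K → ℝ} (ha : ∀ i w, 0 < a i w)
    (R : ℝ≥0) (hR : 0 < R) :
    {x : Fin m → KS K | wnorm a x < R} = univ.pi fun i => convexBodyLT K fun w => R ^ a i w := by
  ext x
  simp only [mem_ofPred_eq, wnorm, iSup_lt_iff_of_finite (NNReal.coe_pos.mpr hR), Set.mem_pi,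
    mem_univ, forall_const, ← setOf_forall_placeAbs_lt, NNReal.coe_rpow, one_div]
  exact forall_congr' fun i => forall_congr' fun w =>
    Real.rpow_inv_lt_iff_of_pos (placeAbs_nonneg _ _) R.2 (ha i w)

theorem IsWeight.sum_sum_mul_mult [NumberField K] {a : Fin m → InfinitePlace K → ℝ}
    (ha : IsWeight a) : ∑ i, ∑ w, a i w * mult w = 1 := by
  rw [Finset.sum_comm, sum_eq_sum_add_sum, ← ha.2]
  simp only [mult_isReal, mult_isComplex, Nat.cast_one, Nat.cast_ofNat, mul_one, Finset.sum_mul,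
    mul_comm (2 : ℝ)]

theorem IsWeight.prod_prod_rpow_pow_mult [NumberField K] {a : Fin m → InfinitePlace K → ℝ}
    (ha : IsWeight a) {R : ℝ≥0} (hR : 0 < R) : ∏ i, ∏ w, (R ^ a i w) ^ mult w = R := by
  simp_rw [← NNReal.rpow_mul_natCast]
  apply NNReal.eq
  push_cast
  simp_rw [← Real.rpow_sum_of_pos (NNReal.coe_pos.mpr hR)]
  rw [ha.sum_sum_mul_mult, Real.rpow_one]

end WeightedNorm

section Volume

open NumberField.InfinitePlace NumberField.mixedEmbedding NNReal

variable {K : Type} [Field K] [NumberField K] {m n : ℕ}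

theorem volume_setOf_wnorm_lt {a : Fin m → InfinitePlace K → ℝ} (ha : IsWeight a) (R : ℝ) :
    volume {x : Fin m → KS K | wnorm a x < R} =
      (convexBodyLTFactor K : ℝ≥0∞) ^ m * ENNReal.ofReal R := by
  rcases le_or_gt R 0 with hR | hR
  · have hempty : {x : Fin m → KS K | wnorm a x < R} = ∅ :=
      eq_empty_of_forall_notMem fun x hx => (wnorm_nonneg a x).not_gt (hx.trans_le hR)
    simp [hempty, ENNReal.ofReal_of_nonpos hR]
  lift R to ℝ≥0 using hR.le
  rw [setOf_wnorm_lt ha.1 R (mod_cast hR), volume_pi, Measure.pi_pi]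
  simp_rw [convexBodyLT_volume]
  rw [Finset.prod_mul_distrib, Finset.prod_const, Finset.card_univ, Fintype.card_fin,
    ← ENNReal.ofNNReal_finsetProd, ha.prod_prod_rpow_pow_mult (mod_cast hR),
    ENNReal.ofReal_coe_nnreal]

theorem map_wnorm_volume {a : Fin m → InfinitePlace K → ℝ} (ha : IsWeight a) :
    (volume : Measure (Fin m → KS K)).map (wnorm a) =
      (convexBodyLTFactor K : ℝ≥0∞) ^ m • volume.restrict (Ioi 0) := by
  have hIio (s : ℝ) : (volume : Measure (Fin m → KS K)).map (wnorm a) (Iio s) =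
      (convexBodyLTFactor K : ℝ≥0∞) ^ m * ENNReal.ofReal s := by
    rw [Measure.map_apply (measurable_wnorm a) measurableSet_Iio]
    exact volume_setOf_wnorm_lt ha s
  refine Measure.ext_of_generateFrom_of_iUnion _ (fun k : ℕ => Iio (k : ℝ))
    (BorelSpace.measurable_eq.trans (borel_eq_generateFrom_Iio ℝ)) isPiSystem_Iio
    (eq_univ_of_forall fun x => mem_iUnion.2 (exists_nat_gt x)) (fun k => ⟨k, rfl⟩)
    (fun k => by simp [hIio, ENNReal.mul_eq_top]) ?_
  rintro _ ⟨s, rfl⟩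
  rw [hIio, Measure.smul_apply, Measure.restrict_apply measurableSet_Iio, Iio_inter_Ioi,
    Real.volume_Ioo, sub_zero, smul_eq_mul]

theorem lintegral_inv_Ico_one_exp {T : ℝ} (hT : 0 ≤ T) :
    ∫⁻ s in Ico 1 (Real.exp T), ENNReal.ofReal s⁻¹ = ENNReal.ofReal T := by
  have hpos : ∀ s ∈ Icc 1 (Real.exp T), 0 < s := fun s hs => one_pos.trans_le hs.1
  rw [← ofReal_integral_eq_lintegral_ofReal, integral_Ico_eq_integral_Ioc,
    ← intervalIntegral.integral_of_le (Real.one_le_exp hT), integral_inv_of_pos one_pos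
    (Real.exp_pos T), div_one, Real.log_exp]
  · exact ((continuousOn_inv₀.mono fun s hs => (hpos s hs).ne').integrableOn_Icc).mono_set
      Ico_subset_Icc_self
  · exact (ae_restrict_iff' measurableSet_Ico).2 (.of_forall fun s hs =>
      inv_nonneg.2 (hpos s (Ico_subset_Icc_self hs)).le)

theorem volume_Eset {a : Fin m → InfinitePlace K → ℝ} {b : Fin n → InfinitePlace K → ℝ}
    (ha : IsWeight a) (hb : IsWeight b) {c T : ℝ} (hc : 0 ≤ c) (hT : 0 ≤ T) :
    volume (Eset a b c T) =
      (convexBodyLTFactor K : ℝ≥0∞) ^ (m + n) * ENNReal.ofReal (c * T) := by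
  set S : Set ((Fin m → KS K) × (Fin n → KS K)) :=
    {p | wnorm a p.1 * wnorm b p.2 < c ∧ wnorm b p.2 ∈ Ico 1 (Real.exp T)}
  set g : ℝ → ℝ≥0∞ := fun s => (convexBodyLTFactor K : ℝ≥0∞) ^ m * ENNReal.ofReal (c / s)
    with hg
  have hS : MeasurableSet S :=
    (measurableSet_lt (((measurable_wnorm a).comp measurable_fst).mul
      ((measurable_wnorm b).comp measurable_snd)) measurable_const).inter
      ((measurable_wnorm b).comp measurable_snd measurableSet_Ico)
  have hslice (y : Fin n → KS K) :
      volume ((fun x => (x, y)) ⁻¹' S) = (Ico 1 (Real.exp T)).indicator g (wnorm b y) := by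
    by_cases hy : wnorm b y ∈ Ico 1 (Real.exp T)
    · have hpos : 0 < wnorm b y := one_pos.trans_le hy.1
      rw [indicator_of_mem hy, hg]
      beta_reduce
      rw [← volume_setOf_wnorm_lt ha]
      congr 1
      ext x
      simp [S, hy.1, hy.2, lt_div_iff₀ hpos]
    · have hempty : (fun x => (x, y)) ⁻¹' S = ∅ :=
        eq_empty_of_forall_notMem fun x hx => hy hx.2
      rw [hempty, measure_empty, indicator_of_notMem hy]
  -- instance search needs this to find σ-finiteness of `volume` on `Fin n → KS K`
  have : SigmaFinite (volume : Measure (KS K)) := inferInstance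
  calc volume (Eset a b c T)
      = volume S :=
        (volume_measurePreserving_sumPiEquivProdPi fun _ : Fin m ⊕ Fin n => KS K
          ).measure_preimage hS.nullMeasurableSet
    _ = ∫⁻ y, (Ico 1 (Real.exp T)).indicator g (wnorm b y) := by
        rw [Measure.volume_eq_prod, Measure.prod_apply_symm hS]
        simp_rw [hslice]
    _ = ∫⁻ s, (Ico 1 (Real.exp T)).indicator g s ∂(volume.map (wnorm b)) :=
        (lintegral_map ((by fun_prop : Measurable g).indicator measurableSet_Ico)
          (measurable_wnorm b)).symm
    _ = (convexBodyLTFactor K : ℝ≥0∞) ^ n * ∫⁻ s in Ico 1 (Real.exp T), g s := by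
        rw [map_wnorm_volume hb, lintegral_smul_measure, lintegral_indicator measurableSet_Ico,
          Measure.restrict_restrict measurableSet_Ico,
          inter_eq_left.2 fun s (hs : s ∈ Ico 1 (Real.exp T)) =>
            show s ∈ Ioi 0 from one_pos.trans_le hs.1, smul_eq_mul]
    _ = (convexBodyLTFactor K : ℝ≥0∞) ^ (m + n) * ENNReal.ofReal (c * T) := by
        simp_rw [hg, div_eq_mul_inv, ENNReal.ofReal_mul hc]
        rw [lintegral_const_mul _ (by fun_prop), lintegral_const_mul _ (by fun_prop),
          lintegral_inv_Ico_one_exp hT, pow_add]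
        ring

theorem coe_convexBodyLTFactor_eq_ofReal :
    (convexBodyLTFactor K : ℝ≥0∞) = ENNReal.ofReal
      ((2 : ℝ) ^ Fintype.card {w : InfinitePlace K // w.IsReal} *
        Real.pi ^ Fintype.card {w : InfinitePlace K // w.IsComplex}) := by
  rw [← ENNReal.ofReal_coe_nnreal]
  congr 1

theorem lamd_Eset {a : Fin m → InfinitePlace K → ℝ} {b : Fin n → InfinitePlace K → ℝ}
    (ha : IsWeight a) (hb : IsWeight b) {ϖ c T : ℝ} (hϖ : 0 ≤ ϖ) (hc : 0 ≤ c) (hT : 0 ≤ T) :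
    lamd K (Fin m ⊕ Fin n) ϖ (Eset a b c T) =
      ENNReal.ofReal (((2 : ℝ) ^ Fintype.card {w : InfinitePlace K // w.IsReal} *
        Real.pi ^ Fintype.card {w : InfinitePlace K // w.IsComplex} *
        ϖ ^ Module.finrank ℚ K) ^ (m + n) * (c * T)) := by
  rw [lamd, Measure.smul_apply, volume_Eset ha hb hc hT, coe_convexBodyLTFactor_eq_ofReal, smul_eq_mul,
    ← ENNReal.ofReal_pow hϖ, ← ENNReal.ofReal_pow (by positivity),
    ← ENNReal.ofReal_mul (by positivity), ← ENNReal.ofReal_mul (by positivity), Fintype.card_sum, Fintype.card_fin, Fintype.card_fin]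
  congr 1
  ring

end Volume

theorem Eset_volume_general (K : Type) [Field K] [NumberField K] (m n : ℕ)
    (a : Fin m → InfinitePlace K → ℝ) (b : Fin n → InfinitePlace K → ℝ)
    (ha : IsWeight a) (hb : IsWeight b)
    (ϖ : ℝ) (hϖ : 0 < ϖ)
    (c T : ℝ) (hc : 0 < c) (hT : 0 < T) :
    lamd K (Fin m ⊕ Fin n) ϖ (Eset a b c T) =
        ENNReal.ofReal
          (((2 : ℝ) ^ (Fintype.card {w : InfinitePlace K // w.IsReal}) *
              Real.pi ^ (Fintype.card {w : InfinitePlace K // w.IsComplex}) *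
              ϖ ^ (Module.finrank ℚ K)) ^ (m + n) * (c * T)) ∧
      ∀ r : ℝ, 0 < r →
        ENNReal.ofReal r * lamd K (Fin m ⊕ Fin n) ϖ (Eset a b c T) =
          ENNReal.ofReal T * lamd K (Fin m ⊕ Fin n) ϖ (Eset a b c r) := by
  refine ⟨lamd_Eset ha hb hϖ.le hc.le hT.le, fun r hr => ?_⟩
  rw [lamd_Eset ha hb hϖ.le hc.le hT.le, lamd_Eset ha hb hϖ.le hc.le hr.le,
    ← ENNReal.ofReal_mul hr.le, ← ENNReal.ofReal_mul hT.le]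
  ring_nf

/-- **The volume of `E_{T,c}`**: `|E_{T,c}| = (2^{#S_ℝ} π^{#S_ℂ} ϖ^k)^d · c · T`;
in particular `r·|E_{T,c}| = T·|E_{r,c}|`. -/
theorem Eset_volume (K : Type) [Field K] [NumberField K] (m n : ℕ) (hm : 0 < m) (hn : 0 < n)
    (a : Fin m → InfinitePlace K → ℝ) (b : Fin n → InfinitePlace K → ℝ)
    (ha : IsWeight a) (hb : IsWeight b)
    (ϖ : ℝ) (hϖ : 0 < ϖ) (hcov : covolOne K ϖ)
    (c T : ℝ) (hc : 0 < c) (hT : 0 < T) :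
    lamd K (Fin m ⊕ Fin n) ϖ (Eset a b c T) =
        ENNReal.ofReal
          (((2 : ℝ) ^ (Fintype.card {w : InfinitePlace K // w.IsReal}) *
              Real.pi ^ (Fintype.card {w : InfinitePlace K // w.IsComplex}) *
              ϖ ^ (Module.finrank ℚ K)) ^ (m + n) * (c * T)) ∧
      ∀ r : ℝ, 0 < r →
        ENNReal.ofReal r * lamd K (Fin m ⊕ Fin n) ϖ (Eset a b c T) =
          ENNReal.ofReal T * lamd K (Fin m ⊕ Fin n) ϖ (Eset a b c r) :=
  Eset_volume_general K m n a b ha hb ϖ hϖ c T hc hT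

end Paper
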